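/- Let Q = (T, Σ, q(x⃗)) be a c-safe OMQ, let I_c be a core for K = (T, Σ, A), and let ā be a tuple of individuals occurring in K with I_c ⊭ q(ā). If J is an extension of I_c with J ⊨ K, then J ⊭ q(ā), and consequently K ⊭ q(ā). -/

import Mathlib

set_option autoImplicit false
set_option linter.unusedVariables false

/-! # ALCHOI with closed predicates: syntax -/

/-- Basic roles: role names `p` or their inverses `p⁻`. -/
inductive DLRole : Type
  | name : ℕ → DLRole
  | inv : ℕ → DLRole
  deriving DecidableEq

/-- The inverse `r⁻` of a basic role. -/
def DLRole.invert : DLRole → DLRole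
  | .name p => .inv p
  | .inv p => .name p

/-- The underlying role name of a basic role. -/
def DLRole.nameOf : DLRole → ℕ
  | .name p => p
  | .inv p => p

/-- ALCHOI concepts. -/
inductive DLConcept : Type
  | atom : ℕ → DLConcept            -- concept name
  | top : DLConcept
  | bot : DLConcept
  | nom : ℕ → DLConcept             -- nominal {a}
  | neg : DLConcept → DLConcept
  | conj : DLConcept → DLConcept → DLConcept
  | disj : DLConcept → DLConcept → DLConcept
  | ex : DLRole → DLConcept → DLConcept
  | all : DLRole → DLConcept → DLConcept
  deriving DecidableEq

/-- TBox inclusions: concept inclusions and role inclusions. -/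
inductive Inclusion : Type
  | concl : DLConcept → DLConcept → Inclusion
  | rolel : DLRole → DLRole → Inclusion
  deriving DecidableEq

/-- ABox assertions `A(a)`, `p(a,b)` (over concept and role *names*). -/
inductive Assertion : Type
  | ca : ℕ → ℕ → Assertion
  | ra : ℕ → ℕ → ℕ → Assertion
  deriving DecidableEq

abbrev TBox := List Inclusion
abbrev ABox := List Assertion

/-- A closed predicate is a concept name or a role name. -/
inductive ClosedPred : Type
  | cp : ℕ → ClosedPred
  | rp : ℕ → ClosedPred
  deriving DecidableEq

/-- A knowledge base with closed predicates. -/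
structure KB where
  tbox : TBox
  sig : Set ClosedPred
  abox : ABox

/-- Domain elements: named individuals (standard name assumption), fringe
individuals `c^α`, and anonymous elements. -/
inductive Elem : Type
  | ind : ℕ → Elem
  | fringe : ℕ → Inclusion → Elem
  | anon : ℕ → Elem
  deriving DecidableEq

def Elem.isFringe : Elem → Prop
  | .fringe _ _ => True
  | _ => False

/-! # Semantics -/

/-- An interpretation. -/
structure Interp where
  dom : Set Elem
  dom_nonempty : dom.Nonempty
  intC : ℕ → Set Elem
  intR : ℕ → Set (Elem × Elem)
  intI : ℕ → Elem
  intC_sub : ∀ A, intC A ⊆ dom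
  intR_sub : ∀ p, ∀ x ∈ intR p, x.1 ∈ dom ∧ x.2 ∈ dom
  intI_mem : ∀ a, intI a ∈ dom

/-- Extension of a basic role. -/
def Interp.roleExt (I : Interp) : DLRole → Set (Elem × Elem)
  | .name p => I.intR p
  | .inv p => {x | (x.2, x.1) ∈ I.intR p}

/-- Extension of a concept. -/
def Interp.cExt (I : Interp) : DLConcept → Set Elem
  | .atom A => I.intC A
  | .top => I.dom
  | .bot => ∅
  | .nom a => {I.intI a}
  | .neg C => I.dom \ I.cExt C
  | .conj C D => I.cExt C ∩ I.cExt D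
  | .disj C D => I.cExt C ∪ I.cExt D
  | .ex r C => {e | ∃ f, (e, f) ∈ I.roleExt r ∧ f ∈ I.cExt C}
  | .all r C => {e | e ∈ I.dom ∧ ∀ f, (e, f) ∈ I.roleExt r → f ∈ I.cExt C}

def Interp.satIncl (I : Interp) : Inclusion → Prop
  | .concl C D => I.cExt C ⊆ I.cExt D
  | .rolel r s => I.roleExt r ⊆ I.roleExt s

def Interp.satAssert (I : Interp) : Assertion → Prop
  | .ca A a => I.intI a ∈ I.intC A
  | .ra p a b => (I.intI a, I.intI b) ∈ I.intR p

def Interp.satTBox (I : Interp) (T : TBox) : Prop := ∀ α ∈ T, I.satIncl α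

def Interp.satABox (I : Interp) (Ab : ABox) : Prop := ∀ β ∈ Ab, I.satAssert β

/-- `I ⊨_Σ A`: `I` satisfies the ABox, and every membership in a closed
predicate is explicitly asserted. -/
def Interp.satABoxClosed (I : Interp) (sig : Set ClosedPred) (Ab : ABox) : Prop :=
  I.satABox Ab ∧
  (∀ A : ℕ, ClosedPred.cp A ∈ sig → ∀ e ∈ I.intC A,
      ∃ a : ℕ, e = Elem.ind a ∧ Assertion.ca A a ∈ Ab) ∧
  (∀ p : ℕ, ClosedPred.rp p ∈ sig → ∀ x ∈ I.intR p,
      ∃ a b : ℕ, x = (Elem.ind a, Elem.ind b) ∧ Assertion.ra p a b ∈ Ab)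

/-! ## Symbols occurring in a KB -/

def DLConcept.noms : DLConcept → Set ℕ
  | .nom a => {a}
  | .neg C => C.noms
  | .conj C D => C.noms ∪ D.noms
  | .disj C D => C.noms ∪ D.noms
  | .ex _ C => C.noms
  | .all _ C => C.noms
  | _ => ∅

def Inclusion.noms : Inclusion → Set ℕ
  | .concl C D => C.noms ∪ D.noms
  | .rolel _ _ => ∅

def Assertion.inds : Assertion → Set ℕ
  | .ca _ a => {a}
  | .ra _ a b => {a, b}

/-- The individuals occurring in a KB (nominals of the TBox and individuals
of the ABox). -/
def KB.inds (K : KB) : Set ℕ :=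
  (⋃ α ∈ K.tbox, Inclusion.noms α) ∪ ⋃ β ∈ K.abox, Assertion.inds β

def DLConcept.cnames : DLConcept → Set ℕ
  | .atom A => {A}
  | .neg C => C.cnames
  | .conj C D => C.cnames ∪ D.cnames
  | .disj C D => C.cnames ∪ D.cnames
  | .ex _ C => C.cnames
  | .all _ C => C.cnames
  | _ => ∅

def DLConcept.rnames : DLConcept → Set ℕ
  | .neg C => C.rnames
  | .conj C D => C.rnames ∪ D.rnames
  | .disj C D => C.rnames ∪ D.rnames
  | .ex r C => {r.nameOf} ∪ C.rnames
  | .all r C => {r.nameOf} ∪ C.rnames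
  | _ => ∅

def Inclusion.cnames : Inclusion → Set ℕ
  | .concl C D => C.cnames ∪ D.cnames
  | .rolel _ _ => ∅

def Inclusion.rnames : Inclusion → Set ℕ
  | .concl C D => C.rnames ∪ D.rnames
  | .rolel r s => {r.nameOf, s.nameOf}

def TBox.cnames (T : TBox) : Set ℕ := ⋃ α ∈ T, Inclusion.cnames α
def TBox.rnames (T : TBox) : Set ℕ := ⋃ α ∈ T, Inclusion.rnames α

def Assertion.cnames : Assertion → Set ℕ
  | .ca A _ => {A}
  | .ra _ _ _ => ∅

def Assertion.rnames : Assertion → Set ℕ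
  | .ca _ _ => ∅
  | .ra p _ _ => {p}

def KB.cnames (K : KB) : Set ℕ := TBox.cnames K.tbox ∪ ⋃ β ∈ K.abox, Assertion.cnames β
def KB.rnames (K : KB) : Set ℕ := TBox.rnames K.tbox ∪ ⋃ β ∈ K.abox, Assertion.rnames β

/-- An ABox over the given sets of concept names and role names. -/
def ABoxOver (Ab : ABox) (cns rns : Set ℕ) : Prop :=
  ∀ β ∈ Ab, match β with
    | Assertion.ca A _ => A ∈ cns
    | Assertion.ra p _ _ => p ∈ rns

/-- `I ⊨ K` for a KB with closed predicates: the standard name assumption for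
the individuals occurring in `K`, satisfaction of the TBox, and `I ⊨_Σ A`. -/
def isModel (I : Interp) (K : KB) : Prop :=
  (∀ a ∈ K.inds, I.intI a = Elem.ind a ∧ Elem.ind a ∈ I.dom) ∧
  I.satTBox K.tbox ∧
  I.satABoxClosed K.sig K.abox

/-! # Normal form -/

inductive IsBasicConcept : DLConcept → Prop
  | atom (A : ℕ) : IsBasicConcept (.atom A)
  | top : IsBasicConcept .top
  | bot : IsBasicConcept .bot
  | nom (a : ℕ) : IsBasicConcept (.nom a)

inductive IsConjOfBasic : DLConcept → Prop
  | basic {C : DLConcept} : IsBasicConcept C → IsConjOfBasic C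
  | conj {C D : DLConcept} : IsConjOfBasic C → IsConjOfBasic D → IsConjOfBasic (.conj C D)

inductive IsDisjOfBasic : DLConcept → Prop
  | basic {C : DLConcept} : IsBasicConcept C → IsDisjOfBasic C
  | disj {C D : DLConcept} : IsDisjOfBasic C → IsDisjOfBasic D → IsDisjOfBasic (.disj C D)

/-- Inclusions of shape (N1). -/
def IsN1 : Inclusion → Prop
  | .concl C D => IsConjOfBasic C ∧ IsDisjOfBasic D
  | .rolel _ _ => False

/-- The existential inclusion `A ⊑ ∃r.A'` (shape (N2)). -/
def exIncl (A : ℕ) (r : DLRole) (A' : ℕ) : Inclusion :=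
  .concl (.atom A) (.ex r (.atom A'))

def Inclusion.isExistential (α : Inclusion) : Prop := ∃ A r A', α = exIncl A r A'

/-- Inclusions in normal form (N1)--(N4). -/
inductive NormalIncl : Inclusion → Prop
  | n1 {C D : DLConcept} : IsConjOfBasic C → IsDisjOfBasic D → NormalIncl (.concl C D)
  | n2 (A : ℕ) (r : DLRole) (A' : ℕ) : NormalIncl (exIncl A r A')
  | n3 (A : ℕ) (r : DLRole) (A' : ℕ) : NormalIncl (.concl (.atom A) (.all r (.atom A')))
  | n4 (r s : DLRole) : NormalIncl (.rolel r s)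

/-- A TBox in normal form. -/
def NormalTBox (T : TBox) : Prop := ∀ α ∈ T, NormalIncl α

/-! # Role hierarchy and closed roles -/

/-- `r ⊑*_T s`. -/
inductive subRole (T : TBox) : DLRole → DLRole → Prop
  | refl (r : DLRole) : subRole T r r
  | inv {r s : DLRole} : subRole T r s → subRole T r.invert s.invert
  | step {r r₁ s : DLRole} : subRole T r r₁ → Inclusion.rolel r₁ s ∈ T → subRole T r s

/-- `r ∈_T Σ`: `r ⊑*_T s` for some `s` with `s` or `s⁻` in `Σ`. -/
def roleClosed (T : TBox) (sig : Set ClosedPred) (r : DLRole) : Prop :=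
  ∃ s : DLRole, subRole T r s ∧ ClosedPred.rp s.nameOf ∈ sig
/-! # Conjunctive queries -/

/-- Query atoms `A(x)`, `r(x,y)` over variables. -/
inductive QAtom : Type
  | ca : ℕ → ℕ → QAtom
  | ra : ℕ → ℕ → ℕ → QAtom
  deriving DecidableEq

def QAtom.vars : QAtom → Set ℕ
  | .ca _ x => {x}
  | .ra _ x y => {x, y}

/-- Variables of a set of atoms. -/
def qvarsS (s : Set QAtom) : Set ℕ := ⋃ a ∈ s, QAtom.vars a

/-- A conjunctive query with answer variables `ansVars`; all remaining
variables are existentially quantified. -/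
structure CQuery where
  atoms : List QAtom
  ansVars : List ℕ
  ansVars_mem : ∀ x ∈ ansVars, x ∈ qvarsS {a | a ∈ atoms}

def CQuery.atomSet (q : CQuery) : Set QAtom := {a | a ∈ q.atoms}
def CQuery.varSet (q : CQuery) : Set ℕ := qvarsS q.atomSet

def QAtom.satBy : QAtom → Interp → (ℕ → Elem) → Prop
  | .ca A x, I, π => π x ∈ I.intC A
  | .ra p x y, I, π => (π x, π y) ∈ I.intR p

/-- `I ⊨ q(t)` for a tuple `t` of domain elements: some map `π` of the
variables into the domain sends the answer tuple to `t` and satisfies all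
atoms. -/
def Interp.satCQ (I : Interp) (q : CQuery) (t : List Elem) : Prop :=
  ∃ π : ℕ → Elem, (∀ v ∈ q.varSet, π v ∈ I.dom) ∧
    q.ansVars.map π = t ∧ ∀ a ∈ q.atoms, a.satBy I π

/-- `K ⊨ q(t)` for a tuple `t` of individuals. -/
def KB.entailsCQ (K : KB) (q : CQuery) (t : List ℕ) : Prop :=
  ∀ I : Interp, isModel I K → I.satCQ q (t.map Elem.ind)

/-- An ontology-mediated query. -/
structure OMQ where
  tbox : TBox
  sig : Set ClosedPred
  q : CQuery

def OMQ.kb (Q : OMQ) (Ab : ABox) : KB := ⟨Q.tbox, Q.sig, Ab⟩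

/-- `t ∈ cert(Q, A)`: `t` is a tuple (of the query's arity) of individuals
occurring in the KB that is entailed. -/
def certOMQ (Q : OMQ) (Ab : ABox) (t : List ℕ) : Prop :=
  t.length = Q.q.ansVars.length ∧ (∀ a ∈ t, a ∈ (Q.kb Ab).inds) ∧
  (Q.kb Ab).entailsCQ Q.q t

/-- c-variables of an OMQ. -/
def isCVar (Q : OMQ) (x : ℕ) : Prop :=
  x ∈ Q.q.ansVars ∨
  (∃ p y, (QAtom.ra p x y ∈ Q.q.atoms ∨ QAtom.ra p y x ∈ Q.q.atoms) ∧
      roleClosed Q.tbox Q.sig (.name p)) ∨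
  (∃ A, QAtom.ca A x ∈ Q.q.atoms ∧ ClosedPred.cp A ∈ Q.sig)

/-- A c-safe OMQ: all variables of the query are c-variables. -/
def cSafe (Q : OMQ) : Prop := ∀ x ∈ Q.q.varSet, isCVar Q x

/-! ## Query graph, acyclicity -/

/-- The query (Gaifman) graph of a set of atoms. -/
def queryGraphS (s : Set QAtom) : SimpleGraph ℕ where
  Adj x y := x ≠ y ∧ ∃ a ∈ s, x ∈ a.vars ∧ y ∈ a.vars
  symm := ⟨fun x y h => ⟨h.1.symm, h.2.imp fun a h' => ⟨h'.1, h'.2.2, h'.2.1⟩⟩⟩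
  loopless := ⟨fun x h => h.1 rfl⟩

def CQConnectedS (s : Set QAtom) : Prop :=
  ∀ x ∈ qvarsS s, ∀ y ∈ qvarsS s, (queryGraphS s).Reachable x y

/-- Acyclic CQ: the query graph is acyclic, and every edge carries exactly
one role atom. -/
def CQAcyclicS (s : Set QAtom) : Prop :=
  (queryGraphS s).IsAcyclic ∧
  ∀ x y, (queryGraphS s).Adj x y →
    ∃! a : QAtom, a ∈ s ∧ ∃ p, a = QAtom.ra p x y ∨ a = QAtom.ra p y x

/-- `q⁻`: the atoms of `Q` minus the role atoms connecting two c-variables. -/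
def qminus (Q : OMQ) : Set QAtom :=
  {a | a ∈ Q.q.atoms ∧ ¬ ∃ p x y, a = QAtom.ra p x y ∧ isCVar Q x ∧ isCVar Q y}

/-- c-acyclicity: `q⁻` is acyclic and every connected component of `G(q⁻)`
contains exactly one c-variable. -/
def cAcyclic (Q : OMQ) : Prop :=
  CQAcyclicS (qminus Q) ∧
  ∀ x ∈ qvarsS (qminus Q),
    ∃! y, y ∈ qvarsS (qminus Q) ∧ (queryGraphS (qminus Q)).Reachable x y ∧ isCVar Q y

/-- Instance query: a single atom, all of whose variables are answer variables. -/
def isInstanceQuery (q : CQuery) : Prop :=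
  (∃ a : QAtom, q.atoms = [a]) ∧ ∀ v ∈ q.varSet, v ∈ q.ansVars

/-! ## Rooted tree presentations of acyclic CQs and query concepts -/

/-- Rooted trees presenting connected acyclic CQs: a node carries its
variable, the concept names labelling it, and its children together with the
(possibly inverse) role connecting to them. -/
inductive QTree : Type
  | node : ℕ → List ℕ → List (DLRole × QTree) → QTree

def QTree.root : QTree → ℕ
  | .node x _ _ => x

def conjOfList : List DLConcept → DLConcept
  | [] => .top
  | C :: rest => .conj C (conjOfList rest)

mutual
  /-- The query concept `C_{q,x}` determined by a rooted tree presentation. -/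
  def QTree.concept : QTree → DLConcept
    | .node _ cs children =>
        .conj (conjOfList (cs.map DLConcept.atom)) (QTree.childConcept children)
  def QTree.childConcept : List (DLRole × QTree) → DLConcept
    | [] => .top
    | (r, t) :: rest => .conj (.ex r (QTree.concept t)) (QTree.childConcept rest)
end

/-- The role atom represented by a tree edge from `x` to `y` labelled `r`. -/
def edgeAtom (x : ℕ) (r : DLRole) (y : ℕ) : QAtom :=
  match r with
  | .name p => .ra p x y
  | .inv p => .ra p y x

mutual
  /-- The set of atoms represented by a tree. -/
  def QTree.atomSet : QTree → Set QAtom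
    | .node x cs children =>
        {a | ∃ A ∈ cs, a = QAtom.ca A x} ∪ QTree.childAtomSet x children
  def QTree.childAtomSet : ℕ → List (DLRole × QTree) → Set QAtom
    | _, [] => ∅
    | x, (r, t) :: rest =>
        insert (edgeAtom x r t.root) (QTree.atomSet t) ∪ QTree.childAtomSet x rest
end

mutual
  def QTree.varList : QTree → List ℕ
    | .node x _ children => x :: QTree.childVarList children
  def QTree.childVarList : List (DLRole × QTree) → List ℕ
    | [] => []
    | (_, t) :: rest => QTree.varList t ++ QTree.childVarList rest
end

/-- `t` is the rooted tree presentation of the CQ `q` (viewed as a set of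
atoms) with root variable `x`. -/
def QTree.presents (t : QTree) (q : Set QAtom) (x : ℕ) : Prop :=
  t.root = x ∧ t.atomSet = q ∧ t.varList.Nodup
/-! ## Concept and role names occurring in an OMQ -/

def QAtom.cnames : QAtom → Set ℕ
  | .ca A _ => {A}
  | .ra _ _ _ => ∅

def QAtom.rnames : QAtom → Set ℕ
  | .ca _ _ => ∅
  | .ra p _ _ => {p}

def OMQ.cnames (Q : OMQ) : Set ℕ := TBox.cnames Q.tbox ∪ ⋃ a ∈ Q.q.atoms, QAtom.cnames a
def OMQ.rnames (Q : OMQ) : Set ℕ := TBox.rnames Q.tbox ∪ ⋃ a ∈ Q.q.atoms, QAtom.rnames a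
/-! # Cores and extensions -/

/-- The possible domain of a core for `K`: the individuals of `K` plus the
fringe individuals `c^α` for existential inclusions `α` of the TBox. -/
def coreDom (K : KB) : Set Elem :=
  {e | ∃ a ∈ K.inds, e = Elem.ind a} ∪
  {e | ∃ a ∈ K.inds, ∃ α ∈ K.tbox, Inclusion.isExistential α ∧ e = Elem.fringe a α}

/-- A core for a KB with closed predicates (conditions (c1)--(c5)). -/
structure IsCore (Ic : Interp) (K : KB) : Prop where
  dom_sub : Ic.dom ⊆ coreDom K
  inds_sub : ∀ a ∈ K.inds, Elem.ind a ∈ Ic.dom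
  sna : ∀ a ∈ K.inds, Ic.intI a = Elem.ind a
  c2 : Ic.satABoxClosed K.sig K.abox
  c3 : ∀ α ∈ K.tbox,
        (¬ α.isExistential → Ic.satIncl α) ∧
        (∀ A r A', α = exIncl A r A' → roleClosed K.tbox K.sig r → Ic.satIncl α)
  c4 : ∀ p : ℕ, ∀ x ∈ Ic.intR p,
        (∃ a b, a ∈ K.inds ∧ b ∈ K.inds ∧ x = (Elem.ind a, Elem.ind b)) ∨
        (∃ a α, a ∈ K.inds ∧ x = (Elem.ind a, Elem.fringe a α)) ∨
        (∃ a α, a ∈ K.inds ∧ x = (Elem.fringe a α, Elem.ind a))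
  c5 : ∀ e ∈ Ic.dom, ¬ e.isFringe →
        ∀ A r A', exIncl A r A' ∈ K.tbox → e ∈ Ic.intC A →
          e ∈ Ic.cExt (.ex r (.atom A'))

/-- `J` is an extension of the core `Ic` (with respect to the closed
predicates `sig`). -/
structure IsExtension (J Ic : Interp) (sig : Set ClosedPred) : Prop where
  dom_sub : Ic.dom ⊆ J.dom
  cAgree : ∀ A : ℕ, Ic.intC A = J.intC A ∩ Ic.dom
  rAgree : ∀ p : ℕ, Ic.intR p = J.intR p ∩ (Ic.dom ×ˢ Ic.dom)
  closedC : ∀ A : ℕ, ClosedPred.cp A ∈ sig → J.intC A = Ic.intC A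
  closedR : ∀ p : ℕ, ClosedPred.rp p ∈ sig → J.intR p = Ic.intR p

/-! # Types and the model building game -/

/-- The basic concepts occurring in a concept. -/
def DLConcept.basics : DLConcept → Set DLConcept
  | .atom A => {.atom A}
  | .nom a => {.nom a}
  | .top => {.top}
  | .bot => {.bot}
  | .neg C => C.basics
  | .conj C D => C.basics ∪ D.basics
  | .disj C D => C.basics ∪ D.basics
  | .ex _ C => C.basics
  | .all _ C => C.basics

def Inclusion.basics : Inclusion → Set DLConcept
  | .concl C D => C.basics ∪ D.basics
  | .rolel _ _ => ∅

/-- `N_C⁺(T)`: the basic concepts occurring in `T`, together with `⊤`, `⊥`. -/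
def TBox.basicConcepts (T : TBox) : Set DLConcept :=
  {DLConcept.top, DLConcept.bot} ∪ ⋃ α ∈ T, Inclusion.basics α

/-- A type over `T`. -/
def IsType (T : TBox) (τ : Set DLConcept) : Prop :=
  τ ⊆ TBox.basicConcepts T ∧ DLConcept.top ∈ τ ∧ DLConcept.bot ∉ τ

/-- `type(e, I)`. -/
def typeOf (T : TBox) (I : Interp) (e : Elem) : Set DLConcept :=
  {B | B ∈ TBox.basicConcepts T ∧ e ∈ I.cExt B}

/-- `τ` is realized in `I`. -/
def realizedIn (T : TBox) (I : Interp) (τ : Set DLConcept) : Prop :=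
  ∃ e ∈ I.dom, typeOf T I e = τ

def conjuncts : DLConcept → Set DLConcept
  | .conj C D => conjuncts C ∪ conjuncts D
  | C => {C}

def disjuncts : DLConcept → Set DLConcept
  | .disj C D => disjuncts C ∪ disjuncts D
  | C => {C}

/-- `τ` satisfies an (N1) inclusion. -/
def typeSatN1 (τ : Set DLConcept) : Inclusion → Prop
  | .concl C D => conjuncts C ⊆ τ → ∃ B ∈ disjuncts D, B ∈ τ
  | .rolel _ _ => True

/-- c-types. -/
def IsCType (T : TBox) (sig : Set ClosedPred) (τ : Set DLConcept) : Prop :=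
  (∃ a, DLConcept.nom a ∈ τ) ∨
  (∃ A, DLConcept.atom A ∈ τ ∧ ClosedPred.cp A ∈ sig) ∨
  (∃ A r A', exIncl A r A' ∈ T ∧ roleClosed T sig r ∧ DLConcept.atom A ∈ τ)

/-- The locally consistent types `LC(T, Σ, I_c)`. -/
def LC (T : TBox) (sig : Set ClosedPred) (Ic : Interp) : Set (Set DLConcept) :=
  {τ | IsType T τ ∧ (∀ α ∈ T, IsN1 α → typeSatN1 τ α) ∧
       (IsCType T sig τ → realizedIn T Ic τ)}

/-- Conditions (C1) and (C2): `τ'` is a legal response to the challenge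
`A ⊑ ∃r.A'` against the current type `τ`. -/
def LegalResponse (T : TBox) (A : ℕ) (r : DLRole) (A' : ℕ) (τ τ' : Set DLConcept) : Prop :=
  DLConcept.atom A' ∈ τ' ∧
  ∀ A₁ s A₂, Inclusion.concl (.atom A₁) (.all s (.atom A₂)) ∈ T →
    (subRole T r s → DLConcept.atom A₁ ∈ τ → DLConcept.atom A₂ ∈ τ') ∧
    (subRole T r.invert s → DLConcept.atom A₁ ∈ τ' → DLConcept.atom A₂ ∈ τ)

/-- A strategy for Bob, as a partial function. -/
abbrev Strategy := Set DLConcept → Inclusion → Option (Set DLConcept)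

/-- Well-formedness of a strategy: it is defined only on pairs of a non-c-type
`τ` and an existential inclusion of `T` triggered by `τ`, and returns a type
satisfying (C1) and (C2). -/
def IsStrategy (T : TBox) (sig : Set ClosedPred) (str : Strategy) : Prop :=
  ∀ τ α τ', str τ α = some τ' →
    IsType T τ ∧ ¬ IsCType T sig τ ∧ IsType T τ' ∧
    ∃ A r A', α = exIncl A r A' ∧ α ∈ T ∧ DLConcept.atom A ∈ τ ∧
      LegalResponse T A r A' τ τ'

/-- A finite run `a α₁ τ₁ α₂ τ₂ ⋯`. -/
structure GRun where
  start : Elem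
  steps : List (Inclusion × Set DLConcept)

/-- `tail(w)`. -/
def GRun.tail (T : TBox) (Ic : Interp) (w : GRun) : Set DLConcept :=
  match w.steps.getLast? with
  | some s => s.2
  | none => typeOf T Ic w.start

/-- `w` is a (finite) run of the game on the core `Ic`: it starts at a fringe
individual of `Ic`, its inclusions are existential inclusions of `T`, its
types are types over `T`, and only its last type may be a c-type. -/
def IsRunOn (T : TBox) (sig : Set ClosedPred) (Ic : Interp) (w : GRun) : Prop :=
  (∃ c α, w.start = Elem.fringe c α) ∧ w.start ∈ Ic.dom ∧
  (∀ s ∈ w.steps, s.1 ∈ T ∧ s.1.isExistential ∧ IsType T s.2) ∧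
  (∀ (i : ℕ) s, w.steps[i]? = some s → i + 1 < w.steps.length → ¬ IsCType T sig s.2)

def FollowsFrom (str : Strategy) : Set DLConcept → List (Inclusion × Set DLConcept) → Prop
  | _, [] => True
  | τ, (α, τ') :: rest => str τ α = some τ' ∧ FollowsFrom str τ' rest

/-- `w` follows the strategy `str` on `Ic`. -/
def RunFollows (T : TBox) (Ic : Interp) (str : Strategy) (w : GRun) : Prop :=
  FollowsFrom str (typeOf T Ic w.start) w.steps

/-- A non-losing strategy for Bob on `Ic`. -/
def NonLosing (T : TBox) (sig : Set ClosedPred) (Ic : Interp) (str : Strategy) : Prop :=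
  IsStrategy T sig str ∧
  ∀ w : GRun, IsRunOn T sig Ic w → RunFollows T Ic str w →
    w.tail T Ic ∈ LC T sig Ic ∧
    (¬ IsCType T sig (w.tail T Ic) →
      ∀ A r A', exIncl A r A' ∈ T → DLConcept.atom A ∈ w.tail T Ic →
        ∃ τ', str (w.tail T Ic) (exIncl A r A') = some τ')

/-! # The marking algorithm -/

/-- The types marked by the type elimination algorithm `Mark(T, Σ, I_c)`:
the least set containing all types violating some (N1) inclusion, all
c-types not realized in `I_c`, and closed under the rule (M_∃): a type gets
marked if some existential inclusion triggered by it has all its legal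
responses already marked. -/
inductive Marked (T : TBox) (sig : Set ClosedPred) (Ic : Interp) : Set DLConcept → Prop
  | n1 {τ : Set DLConcept} : IsType T τ →
      (∃ α ∈ T, IsN1 α ∧ ¬ typeSatN1 τ α) → Marked T sig Ic τ
  | closed {τ : Set DLConcept} : IsType T τ → IsCType T sig τ →
      ¬ realizedIn T Ic τ → Marked T sig Ic τ
  | exStep {τ : Set DLConcept} {A : ℕ} {r : DLRole} {A' : ℕ} :
      IsType T τ → exIncl A r A' ∈ T → DLConcept.atom A ∈ τ →
      (∀ τ', IsType T τ' → LegalResponse T A r A' τ τ' → Marked T sig Ic τ') →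
      Marked T sig Ic τ
/-! # Datalog with disjunction and negation, stable model semantics -/

/-- Predicate symbols: the concept names (unary), the role names (binary),
the built-in inequality predicate, and auxiliary predicates. -/
inductive DPred : Type
  | concept : ℕ → DPred
  | role : ℕ → DPred
  | neq : DPred
  | aux : ℕ → DPred
  deriving DecidableEq

inductive DTerm : Type
  | var : ℕ → DTerm
  | const : ℕ → DTerm
  deriving DecidableEq

structure DAtom where
  pred : DPred
  args : List DTerm
  deriving DecidableEq

/-- Ground atoms (over the constants). -/
structure GAtom where
  pred : DPred
  args : List ℕ
  deriving DecidableEq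

/-- A rule `h₁ ∨ ⋯ ∨ hₙ ← b₁, …, bₖ, not c₁, …, not cₘ`. -/
structure DRule where
  head : List DAtom
  posBody : List DAtom
  negBody : List DAtom
  deriving DecidableEq

abbrev DProgram := List DRule

def DTerm.constOf : DTerm → Set ℕ
  | .var _ => ∅
  | .const c => {c}

def DTerm.varOf : DTerm → Set ℕ
  | .var v => {v}
  | .const _ => ∅

def DAtom.consts (a : DAtom) : Set ℕ := ⋃ t ∈ a.args, DTerm.constOf t
def DAtom.vars (a : DAtom) : Set ℕ := ⋃ t ∈ a.args, DTerm.varOf t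
def DRule.atoms (ρ : DRule) : List DAtom := ρ.head ++ ρ.posBody ++ ρ.negBody
def DRule.consts (ρ : DRule) : Set ℕ := ⋃ a ∈ ρ.atoms, DAtom.consts a
def DRule.vars (ρ : DRule) : Set ℕ := ⋃ a ∈ ρ.atoms, DAtom.vars a
def progConsts (P : DProgram) : Set ℕ := ⋃ ρ ∈ P, DRule.consts ρ

/-- Safety: every variable of the rule occurs in a positive body atom. -/
def DRule.safe (ρ : DRule) : Prop := ∀ v ∈ ρ.vars, ∃ a ∈ ρ.posBody, v ∈ a.vars

def safeProgram (P : DProgram) : Prop := ∀ ρ ∈ P, ρ.safe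
def nonDisjunctive (P : DProgram) : Prop := ∀ ρ ∈ P, ρ.head.length ≤ 1
def positiveProgram (P : DProgram) : Prop := ∀ ρ ∈ P, ρ.negBody = []
/-- No occurrence of the built-in inequality predicate. -/
def neqFree (P : DProgram) : Prop := ∀ ρ ∈ P, ∀ a ∈ ρ.atoms, a.pred ≠ DPred.neq

/-- Ground rules. -/
structure GRRule where
  head : List GAtom
  posBody : List GAtom
  negBody : List GAtom

def DTerm.subst (σ : ℕ → ℕ) : DTerm → ℕ
  | .var v => σ v
  | .const c => c

def DAtom.inst (σ : ℕ → ℕ) (a : DAtom) : GAtom := ⟨a.pred, a.args.map (DTerm.subst σ)⟩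

def DRule.inst (σ : ℕ → ℕ) (ρ : DRule) : GRRule :=
  ⟨ρ.head.map (DAtom.inst σ), ρ.posBody.map (DAtom.inst σ), ρ.negBody.map (DAtom.inst σ)⟩

/-- The grounding of a program: all instances of its rules over the
constants occurring in the program. -/
def grounding (P : DProgram) : Set GRRule :=
  {g | ∃ ρ ∈ P, ∃ σ : ℕ → ℕ, (∀ v ∈ DRule.vars ρ, σ v ∈ progConsts P) ∧ g = DRule.inst σ ρ}

/-- A constant occurring in a non-inequality atom of `I`. -/
def activeConst (I : Finset GAtom) (c : ℕ) : Prop :=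
  ∃ g ∈ I, g.pred ≠ DPred.neq ∧ c ∈ g.args

/-- The built-in semantics of the inequality predicate: `a ≠ b` holds in `I`
iff `a` and `b` are distinct constants both occurring in non-inequality atoms
of `I`. -/
def respectsNeq (I : Finset GAtom) : Prop :=
  ∀ args : List ℕ, (⟨DPred.neq, args⟩ : GAtom) ∈ I ↔
    ∃ a b : ℕ, args = [a, b] ∧ a ≠ b ∧ activeConst I a ∧ activeConst I b

/-- `I` is a (Herbrand) model of a set of positive ground rules. -/
def isHModel (I : Finset GAtom) (G : Set GRRule) : Prop :=
  respectsNeq I ∧ ∀ g ∈ G, (∀ b ∈ g.posBody, b ∈ I) → ∃ h ∈ g.head, h ∈ I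

/-- The GL-reduct of a set of ground rules with respect to `I`. -/
def glReduct (G : Set GRRule) (I : Finset GAtom) : Set GRRule :=
  {g' | ∃ g ∈ G, (∀ n ∈ g.negBody, n ∉ I) ∧ g' = ⟨g.head, g.posBody, []⟩}

/-- `I` is a stable model of `P`: a minimal model of the GL-reduct of the
grounding of `P` with respect to `I`. -/
def isStable (P : DProgram) (I : Finset GAtom) : Prop :=
  isHModel I (glReduct (grounding P) I) ∧
  ∀ J : Finset GAtom, isHModel J (glReduct (grounding P) I) → J ⊆ I → J = I

/-- ABox assertions as facts. -/
def assertFact : Assertion → DRule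
  | .ca A a => ⟨[⟨DPred.concept A, [DTerm.const a]⟩], [], []⟩
  | .ra p a b => ⟨[⟨DPred.role p, [DTerm.const a, DTerm.const b]⟩], [], []⟩

def aboxFacts (Ab : ABox) : DProgram := Ab.map assertFact

/-- Ground atoms as facts. -/
def gfact (g : GAtom) : DRule := ⟨[⟨g.pred, g.args.map DTerm.const⟩], [], []⟩

def factProg (F : List GAtom) : DProgram := F.map gfact

def GAtom.rename (ρ : ℕ → ℕ) (g : GAtom) : GAtom := ⟨g.pred, g.args.map ρ⟩

def gconsts (F : List GAtom) : Set ℕ := ⋃ g ∈ F, {c | c ∈ g.args}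

/-- `t` is a certain answer to the query `(P, q̂)` over the database `D`:
`q̂(t)` belongs to every stable model of `P ∪ D`. -/
def certD (P : DProgram) (qp : DPred) (D : DProgram) (t : List ℕ) : Prop :=
  ∀ I : Finset GAtom, isStable (P ++ D) I → (⟨qp, t⟩ : GAtom) ∈ I

/-! In a match of a c-safe query, answer variables go to individuals and every other variable
to an element of a closed concept or of a (sub-role of a) closed role; closed predicates are
interpreted in an extension `J` exactly as in `I_c`, so the whole match lies in `Δ^{I_c}`.
Since `J` and `I_c` agree there, it is already a match in `I_c`. -/

lemma Interp.roleExt_invert (I : Interp) (r : DLRole) (x y : Elem) :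
    (x, y) ∈ I.roleExt r.invert ↔ (y, x) ∈ I.roleExt r := by
  cases r <;> simp [DLRole.invert, Interp.roleExt]

lemma Interp.roleExt_subset_dom (I : Interp) (r : DLRole) : I.roleExt r ⊆ I.dom ×ˢ I.dom := by
  rintro ⟨x, y⟩ h
  cases r with
  | name p => exact I.intR_sub p _ h
  | inv p => exact (I.intR_sub p _ h).symm

lemma Interp.roleExt_subset_of_subRole {T : TBox} {I : Interp} (hT : I.satTBox T)
    {r s : DLRole} (h : subRole T r s) : I.roleExt r ⊆ I.roleExt s := by
  induction h with
  | refl r => exact subset_rfl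
  | inv _ ih =>
      rintro ⟨x, y⟩ hxy
      exact (I.roleExt_invert _ x y).mpr (ih ((I.roleExt_invert _ x y).mp hxy))
  | step _ hmem ih => exact (ih.trans (hT _ hmem) :)

namespace IsExtension

variable {J Ic : Interp} {sig : Set ClosedPred}

lemma roleExt_eq_of_closed (hext : IsExtension J Ic sig) {r : DLRole}
    (hr : ClosedPred.rp r.nameOf ∈ sig) : J.roleExt r = Ic.roleExt r := by
  cases r <;> simp only [DLRole.nameOf] at hr <;> simp [Interp.roleExt, hext.closedR _ hr]

lemma satBy_of_vars_mem_dom (hext : IsExtension J Ic sig) {a : QAtom} {π : ℕ → Elem}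
    (ha : a.satBy J π) (hdom : ∀ v ∈ a.vars, π v ∈ Ic.dom) : a.satBy Ic π := by
  cases a with
  | ca A x =>
      show π x ∈ Ic.intC A
      rw [hext.cAgree A]
      exact ⟨ha, hdom x rfl⟩
  | ra p x y =>
      show (π x, π y) ∈ Ic.intR p
      rw [hext.rAgree p]
      exact ⟨ha, hdom x (by simp [QAtom.vars]), hdom y (by simp [QAtom.vars])⟩

lemma satCQ_of_vars_mem_dom (hext : IsExtension J Ic sig) {q : CQuery} {t : List Elem}
    {π : ℕ → Elem} (hans : q.ansVars.map π = t) (hsat : ∀ a ∈ q.atoms, a.satBy J π)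
    (hdom : ∀ v ∈ q.varSet, π v ∈ Ic.dom) : Ic.satCQ q t :=
  ⟨π, hdom, hans, fun a ha =>
    hext.satBy_of_vars_mem_dom (hsat a ha) fun v hv => hdom v (Set.mem_biUnion ha hv)⟩

lemma mem_dom_of_isCVar {Q : OMQ} (hext : IsExtension J Ic Q.sig) (hT : J.satTBox Q.tbox)
    {π : ℕ → Elem} (hsat : ∀ a ∈ Q.q.atoms, a.satBy J π)
    (hans : ∀ x ∈ Q.q.ansVars, π x ∈ Ic.dom) {x : ℕ} (hx : isCVar Q x) : π x ∈ Ic.dom := by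
  rcases hx with hx | ⟨p, y, hatom, s, hsub, hs⟩ | ⟨A, hatom, hA⟩
  · exact hans x hx
  · have hcore : J.roleExt (.name p) ⊆ Ic.dom ×ˢ Ic.dom :=
      (J.roleExt_subset_of_subRole hT hsub).trans
        ((hext.roleExt_eq_of_closed hs).subset.trans (Ic.roleExt_subset_dom s))
    rcases hatom with h | h
    · exact (hcore (hsat _ h)).1
    · exact (hcore (hsat _ h)).2
  · have hJ : π x ∈ J.intC A := hsat _ hatom
    rw [hext.closedC A hA] at hJ
    exact Ic.intC_sub A hJ

end IsExtension

/-- Let `Q = (T, Σ, q(x⃗))` be a c-safe OMQ, `I_c` a core for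
`K = (T, Σ, A)`, and `ā` a tuple of individuals occurring in `K` with
`I_c ⊭ q(ā)`. If `J` is an extension of `I_c` with `J ⊨ K`, then `J ⊭ q(ā)`,
and consequently `K ⊭ q(ā)`. -/
theorem stmt5_extension_nonentailment (Q : OMQ) (hsafe : cSafe Q)
    (hnf : NormalTBox Q.tbox) (Ab : ABox)
    (Ic : Interp) (hc : IsCore Ic (Q.kb Ab))
    (t : List ℕ) (ht : ∀ a ∈ t, a ∈ (Q.kb Ab).inds)
    (hns : ¬ Ic.satCQ Q.q (t.map Elem.ind))
    (J : Interp) (hext : IsExtension J Ic Q.sig)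
    (hmod : isModel J (Q.kb Ab)) :
    ¬ J.satCQ Q.q (t.map Elem.ind) ∧ ¬ (Q.kb Ab).entailsCQ Q.q t := by
  have hJ : ¬ J.satCQ Q.q (t.map Elem.ind) := by
    rintro ⟨π, -, hans, hsat⟩
    have hans_dom : ∀ x ∈ Q.q.ansVars, π x ∈ Ic.dom := by
      intro x hx
      obtain ⟨a, hat, ha⟩ := List.mem_map.mp (hans ▸ List.mem_map_of_mem hx)
      exact ha ▸ hc.inds_sub a (ht a hat)
    exact hns <| hext.satCQ_of_vars_mem_dom hans hsat fun v hv =>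
      hext.mem_dom_of_isCVar hmod.2.1 hsat hans_dom (hsafe v hv)
  exact ⟨hJ, fun hent => hJ (hent J hmod)⟩
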